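/- Let 𝕜 be an RCLike field (ℝ or ℂ), let t be a quantum-logic term in n variables, and suppose there is a finite-dimensional inner product space E over 𝕜 and an assignment X : Fin n → Submodule 𝕜 E with eval t X ≠ ⊥. Then there exists an assignment Y : Fin n → Submodule 𝕜 (EuclideanSpace 𝕜 (Fin (n * size t))) with eval t Y ≠ ⊥, where size t is the number of variable occurrences in t. -/

import Mathlib

/-- A quantum-logic term in `n` variables. -/
inductive Term (n : ℕ) : Type
  | var : Fin n → Term n
  | neg : Term n → Term n
  | inf : Term n → Term n → Term n
  | sup : Term n → Term n → Term n

/-- The value of a quantum-logic term under an assignment of subspaces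
to the variables.  Negation is interpreted as orthogonal complement. -/
def Term.eval {n : ℕ} {𝕜 E : Type*} [RCLike 𝕜] [NormedAddCommGroup E]
    [InnerProductSpace 𝕜 E] : Term n → (Fin n → Submodule 𝕜 E) → Submodule 𝕜 E
  | .var i, U => U i
  | .neg t, U => (t.eval U)ᗮ
  | .inf s t, U => s.eval U ⊓ t.eval U
  | .sup s t, U => s.eval U ⊔ t.eval U

/-- The number of variable occurrences of a term. -/
def Term.size {n : ℕ} : Term n → ℕ
  | .var _ => 1
  | .neg t => t.size
  | .inf s t => s.size + t.size
  | .sup s t => s.size + t.size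


/-!
Push the negations down to the variables, which is legitimate in finite dimension where
`Kᗮᗮ = K`. For a term in negation normal form, a vector `x` of its value stays in the value
after restricting every variable to any subspace `W` spanned by a suitable set of at most
`size t` vectors: a variable occurrence needs only `x` itself, a negated variable survives because
`(X i)ᗮ ∩ W ⊆ (X i ∩ W)ᗮ` inside `W`, and `x = y + z` in a join needs the witnesses of `y` and `z`.
This `W` has dimension at most `size t ≤ n * size t`, so it embeds isometrically into
`EuclideanSpace 𝕜 (Fin (n * size t))`, and images under isometries can only enlarge the values of
terms in negation normal form.
-/

open Submodule Module

namespace Term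

variable {n : ℕ}

-- `t.nnf false` is a negation normal form of `t.neg`.
def nnf : Term n → Bool → Term n
  | .var i, true => .var i
  | .var i, false => .neg (.var i)
  | .neg s, b => s.nnf (!b)
  | .inf s t, true => .inf (s.nnf true) (t.nnf true)
  | .inf s t, false => .sup (s.nnf false) (t.nnf false)
  | .sup s t, true => .sup (s.nnf true) (t.nnf true)
  | .sup s t, false => .inf (s.nnf false) (t.nnf false)

inductive IsNNF : Term n → Prop
  | var (i : Fin n) : IsNNF (.var i)
  | negVar (i : Fin n) : IsNNF (.neg (.var i))
  | inf {s t : Term n} : IsNNF s → IsNNF t → IsNNF (.inf s t)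
  | sup {s t : Term n} : IsNNF s → IsNNF t → IsNNF (.sup s t)

theorem isNNF_nnf : ∀ (t : Term n) (b : Bool), (t.nnf b).IsNNF
  | .var _, true => .var _
  | .var _, false => .negVar _
  | .neg s, b => s.isNNF_nnf (!b)
  | .inf s t, true => .inf (s.isNNF_nnf true) (t.isNNF_nnf true)
  | .inf s t, false => .sup (s.isNNF_nnf false) (t.isNNF_nnf false)
  | .sup s t, true => .sup (s.isNNF_nnf true) (t.isNNF_nnf true)
  | .sup s t, false => .inf (s.isNNF_nnf false) (t.isNNF_nnf false)

theorem size_nnf : ∀ (t : Term n) (b : Bool), (t.nnf b).size = t.size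
  | .var _, true | .var _, false => rfl
  | .neg s, b => s.size_nnf (!b)
  | .inf s t, true | .inf s t, false | .sup s t, true | .sup s t, false => by
    simp only [nnf, size, size_nnf]

theorem arity_pos : Term n → 0 < n
  | .var i => i.pos
  | .neg s | .inf s _ | .sup s _ => s.arity_pos

theorem size_le_arity_mul_size (t : Term n) : t.size ≤ n * t.size :=
  Nat.le_mul_of_pos_left _ t.arity_pos

end Term

section

variable {𝕜 E : Type*} [RCLike 𝕜] [NormedAddCommGroup E] [InnerProductSpace 𝕜 E]

theorem Submodule.orthogonal_inf [FiniteDimensional 𝕜 E] (A B : Submodule 𝕜 E) :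
    (A ⊓ B)ᗮ = Aᗮ ⊔ Bᗮ := by
  rw [← (Aᗮ ⊔ Bᗮ).orthogonal_orthogonal, ← inf_orthogonal, A.orthogonal_orthogonal,
    B.orthogonal_orthogonal]

theorem Term.eval_nnf [FiniteDimensional 𝕜 E] {n : ℕ} (t : Term n)
    (X : Fin n → Submodule 𝕜 E) (b : Bool) :
    (t.nnf b).eval X = cond b (t.eval X) (t.eval X)ᗮ := by
  induction t generalizing b with
  | var i => cases b <;> rfl
  | neg s ih =>
    cases b
    · exact (ih true).trans (s.eval X).orthogonal_orthogonal.symm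
    · exact ih false
  | inf s t ihs iht =>
    cases b <;> simp only [nnf, eval, ihs, iht, cond, orthogonal_inf]
  | sup s t ihs iht =>
    cases b <;> simp only [nnf, eval, ihs, iht, cond, inf_orthogonal]

end

namespace Term.IsNNF

variable {𝕜 E F : Type*} [RCLike 𝕜] [NormedAddCommGroup E] [InnerProductSpace 𝕜 E]
  [NormedAddCommGroup F] [InnerProductSpace 𝕜 F] {n : ℕ} {u : Term n}

theorem map_eval_le (hu : u.IsNNF) (g : E →ₗᵢ[𝕜] F) (X : Fin n → Submodule 𝕜 E) :
    (u.eval X).map g.toLinearMap ≤ u.eval fun i => (X i).map g.toLinearMap := by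
  induction hu with
  | var i => exact le_rfl
  | negVar i => exact (map_orthogonal (X i) g).le.trans inf_le_left
  | inf _ _ ihs iht => exact (map_inf_le _).trans (inf_le_inf ihs iht)
  | sup _ _ ihs iht => exact (Submodule.map_sup _ _ _).le.trans (sup_le_sup ihs iht)

theorem exists_finset_mem_eval_comap (hu : u.IsNNF) (X : Fin n → Submodule 𝕜 E) {x : E}
    (hx : x ∈ u.eval X) :
    ∃ s : Finset E, s.card ≤ u.size ∧ ∀ W : Submodule 𝕜 E, span 𝕜 ↑s ≤ W →
      x ∈ (u.eval fun i => (X i).comap W.subtype).map W.subtype := by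
  classical
  induction hu generalizing x with
  | var i =>
    refine ⟨{x}, (Finset.card_singleton x).le, fun W hW => ?_⟩
    have hxW : x ∈ W := hW (subset_span (by simp))
    exact ⟨⟨x, hxW⟩, hx, rfl⟩
  | negVar i =>
    refine ⟨{x}, (Finset.card_singleton x).le, fun W hW => ?_⟩
    have hxW : x ∈ W := hW (subset_span (by simp))
    exact ⟨⟨x, hxW⟩, fun y hy => (mem_orthogonal _ _).1 hx y hy, rfl⟩
  | @inf s t _ _ ihs iht =>
    obtain ⟨a, has, ha⟩ := ihs hx.1
    obtain ⟨b, hbt, hb⟩ := iht hx.2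
    refine ⟨a ∪ b, (Finset.card_union_le a b).trans (Nat.add_le_add has hbt), fun W hW => ?_⟩
    rw [Finset.coe_union, span_union, sup_le_iff] at hW
    simp only [Term.eval, map_inf _ W.injective_subtype]
    exact ⟨ha W hW.1, hb W hW.2⟩
  | @sup s t _ _ ihs iht =>
    obtain ⟨y, hy, z, hz, rfl⟩ := mem_sup.1 hx
    obtain ⟨a, has, ha⟩ := ihs hy
    obtain ⟨b, hbt, hb⟩ := iht hz
    refine ⟨a ∪ b, (Finset.card_union_le a b).trans (Nat.add_le_add has hbt), fun W hW => ?_⟩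
    rw [Finset.coe_union, span_union, sup_le_iff] at hW
    simp only [Term.eval, Submodule.map_sup]
    exact add_mem_sup (ha W hW.1) (hb W hW.2)

end Term.IsNNF

theorem exists_linearIsometry_euclideanSpace {𝕜 F : Type*} [RCLike 𝕜] [NormedAddCommGroup F]
    [InnerProductSpace 𝕜 F] [FiniteDimensional 𝕜 F] {N : ℕ} (h : finrank 𝕜 F ≤ N) :
    Nonempty (F →ₗᵢ[𝕜] EuclideanSpace 𝕜 (Fin N)) := by
  let b := stdOrthonormalBasis 𝕜 F
  let e := EuclideanSpace.basisFun (Fin N) 𝕜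
  let f := b.toBasis.constr 𝕜 fun i => e (Fin.castLE h i)
  have hf : f ∘ b.toBasis = e ∘ Fin.castLE h := funext (b.toBasis.constr_basis 𝕜 _)
  refine ⟨f.isometryOfOrthonormal (v := b.toBasis) ?_ ?_⟩
  · simpa only [b.coe_toBasis] using b.orthonormal
  · simpa only [hf] using e.orthonormal.comp _ (Fin.castLE_injective h)

theorem weakly_satisfiable_in_small_dimension {n : ℕ} {𝕜 : Type*} [RCLike 𝕜]
    (t : Term n) {E : Type*} [NormedAddCommGroup E] [InnerProductSpace 𝕜 E]
    [FiniteDimensional 𝕜 E]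
    (X : Fin n → Submodule 𝕜 E) (hX : t.eval X ≠ ⊥) :
    ∃ Y : Fin n → Submodule 𝕜 (EuclideanSpace 𝕜 (Fin (n * t.size))),
      t.eval Y ≠ ⊥ := by
  obtain ⟨x, hx, hx0⟩ := (Submodule.ne_bot_iff _).1 hX
  have hnnf := t.isNNF_nnf true
  obtain ⟨s, hs, hxs⟩ := hnnf.exists_finset_mem_eval_comap X ((t.eval_nnf X true).ge hx)
  set W := span 𝕜 (s : Set E)
  obtain ⟨y, hy, rfl⟩ := hxs W le_rfl
  obtain ⟨g⟩ := exists_linearIsometry_euclideanSpace <|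
    calc finrank 𝕜 W ≤ s.card := finrank_span_finset_le_card s
      _ ≤ t.size := t.size_nnf true ▸ hs
      _ ≤ n * t.size := t.size_le_arity_mul_size
  refine ⟨fun i => ((X i).comap W.subtype).map g.toLinearMap,
    (Submodule.ne_bot_iff _).2 ⟨g y, ?_, ?_⟩⟩
  · exact (t.eval_nnf _ true).le (hnnf.map_eval_le g _ (mem_map_of_mem hy))
  · exact (map_ne_zero_iff g g.injective).2 (by simpa using hx0)
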